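/- Let T be a contraction on a complex Hilbert space H. Then: (1) for every h ∈ H the limit lim_{k→∞} ‖T*ᵏh‖² exists; (2) there is a unique positive bounded operator P on H such that ⟨P²h, h⟩ = lim_{k→∞} ‖T*ᵏh‖² for all h ∈ H (equivalently, P² is the strong limit of the decreasing sequence Tᵏ T*ᵏ); (3) ‖P T* h‖ = ‖P h‖ for every h ∈ H, so the map P h ↦ P T* h extends to an isometry of the closure of the range of P into itself. -/

import Mathlib

noncomputable section
namespace GammaModel

/-- `P` is the asymptotic limit of `T*`: `P` is positive and
`⟨P²h, h⟩ = lim_k ‖T*ᵏ h‖²` for every `h`. -/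
def IsAsymptoticLimit {H : Type*} [NormedAddCommGroup H] [InnerProductSpace ℂ H]
    [CompleteSpace H] (T P : H →L[ℂ] H) : Prop :=
  P.IsPositive ∧ ∀ h : H,
    Filter.Tendsto (fun k : ℕ => ‖(ContinuousLinearMap.adjoint T ^ k) h‖ ^ 2)
      Filter.atTop (nhds ((@inner ℂ H _ ((P * P) h) h).re))

end GammaModel

open GammaModel ContinuousLinearMap Filter

/-!
Since `T T* ≤ 1`, the operators `Tᵏ T*ᵏ` form a decreasing sequence of positive operators.
For `n ≤ m` the positive operator `D = Tⁿ T*ⁿ - Tᵐ T*ᵐ` satisfies `D² ≤ ‖D‖ D`, hence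
`‖D h‖² ≤ ‖D‖ (‖T*ⁿ h‖² - ‖T*ᵐ h‖²)`; so `Tᵏ T*ᵏ h` is Cauchy and `Tᵏ T*ᵏ` converges strongly
to a positive operator `A`, and `P = √A` is an asymptotic limit. Any asymptotic limit `P`
satisfies `‖P h‖² = lim ‖T*ᵏ h‖²`, which determines `P² = P* P` and hence `P`; and
`‖P T* h‖² = lim ‖T*ᵏ⁺¹ h‖² = ‖P h‖²`.
-/

open Topology RCLike InnerProductSpace

theorem cauchySeq_of_dist_sq_le {α : Type*} [PseudoMetricSpace α] {u : ℕ → α} {v : ℕ → ℝ}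
    (hv : CauchySeq v) (C : ℝ) (h : ∀ n m, dist (u n) (u m) ^ 2 ≤ C * dist (v n) (v m)) :
    CauchySeq u := by
  rw [cauchySeq_iff_tendsto_dist_atTop_0] at hv ⊢
  have hbound : Tendsto (fun p : ℕ × ℕ => √(C * dist (v p.1) (v p.2))) atTop (𝓝 0) := by
    simpa using (hv.const_mul C).sqrt
  exact squeeze_zero (fun _ => dist_nonneg) (fun p => Real.le_sqrt_of_sq_le (h p.1 p.2)) hbound

namespace CStarAlgebra

variable {A : Type*} [CStarAlgebra A] [PartialOrder A] [StarOrderedRing A]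

theorem mul_self_le_norm_smul {a : A} (ha : 0 ≤ a) : a * a ≤ ‖a‖ • a := by
  obtain ⟨s, hs, rfl⟩ : ∃ s : A, 0 ≤ s ∧ s * s = a :=
    ⟨CFC.sqrt a, CFC.sqrt_nonneg a, CFC.sqrt_mul_sqrt_self a⟩
  simpa only [hs.isSelfAdjoint.star_eq, mul_assoc] using
    star_left_conjugate_le_norm_smul (a := s) (b := s * s)

theorem antitone_pow_mul_star_pow {a : A} (ha : ‖a‖ ≤ 1) :
    Antitone fun k : ℕ => a ^ k * star a ^ k := by
  have hle : a * star a ≤ 1 := by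
    rw [← norm_le_one_iff_of_nonneg _ (mul_star_self_nonneg a), CStarRing.norm_self_mul_star]
    exact mul_le_one₀ ha (norm_nonneg a) ha
  refine antitone_nat_of_succ_le fun k => ?_
  calc a ^ (k + 1) * star a ^ (k + 1) = a ^ k * (a * star a) * star (a ^ k) := by
        rw [star_pow, pow_succ, pow_succ']; simp only [mul_assoc]
    _ ≤ a ^ k * 1 * star (a ^ k) := star_right_conjugate_le_conjugate hle _
    _ = a ^ k * star a ^ k := by rw [mul_one, star_pow]

end CStarAlgebra

namespace ContinuousLinearMap

section RCLike

variable {𝕜 E : Type*} [RCLike 𝕜] [NormedAddCommGroup E] [InnerProductSpace 𝕜 E]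

theorem _root_.IsSelfAdjoint.eq_of_re_inner_map_self_eq [CompleteSpace E] {S T : E →L[𝕜] E}
    (hS : IsSelfAdjoint S) (hT : IsSelfAdjoint T) (h : ∀ x, re ⟪S x, x⟫_𝕜 = re ⟪T x, x⟫_𝕜) : S = T := by
  have hST := (hS.sub hT).isSymmetric
  rw [← sub_eq_zero, ← coe_inj, toLinearMap_zero, ← hST.inner_map_self_eq_zero]
  intro x
  rw [← hST.coe_re_inner_apply_self]
  simp [inner_sub_left, h x]

theorem isPositive_of_tendsto {ι : Type*} {l : Filter ι} [l.NeBot] {A : ι → E →L[𝕜] E}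
    {B : E →L[𝕜] E} (hA : ∀ i, (A i).IsPositive)
    (hB : ∀ x, Tendsto (fun i => A i x) l (𝓝 (B x))) : B.IsPositive := by
  refine ⟨fun x y => tendsto_nhds_unique ((hB x).inner tendsto_const_nhds) ?_, fun x => ?_⟩
  · simp only [coe_coe, (hA _).inner_left_eq_inner_right]
    exact tendsto_const_nhds.inner (hB y)
  · exact ge_of_tendsto ((continuous_re.tendsto _).comp ((hB x).inner tendsto_const_nhds))
      (Eventually.of_forall fun i => (hA i).re_inner_nonneg_left x)

end RCLike

variable {H : Type*} [NormedAddCommGroup H] [InnerProductSpace ℂ H] [CompleteSpace H]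

theorem IsPositive.eq_of_norm_apply_eq {P Q : H →L[ℂ] H} (hP : P.IsPositive) (hQ : Q.IsPositive)
    (h : ∀ x, ‖P x‖ = ‖Q x‖) : P = Q := by
  have hPQ : star P * P = star Q * Q :=
    (IsSelfAdjoint.star_mul_self P).eq_of_re_inner_map_self_eq (.star_mul_self Q) fun x => by
      simp only [star_eq_adjoint, mul_def, ← apply_norm_sq_eq_inner_adjoint_left, h x]
  rw [hP.isSelfAdjoint.star_eq, hQ.isSelfAdjoint.star_eq] at hPQ
  rw [← CFC.sqrt_mul_self P ((nonneg_iff_isPositive P).2 hP), hPQ,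
    CFC.sqrt_mul_self Q ((nonneg_iff_isPositive Q).2 hQ)]

theorem norm_sq_apply_le_norm_mul_re_inner {D : H →L[ℂ] H} (hD : 0 ≤ D) (x : H) :
    ‖D x‖ ^ 2 ≤ ‖D‖ * re ⟪D x, x⟫_ℂ := by
  have hsq := ((le_def _ _).1 (CStarAlgebra.mul_self_le_norm_smul hD)).re_inner_nonneg_left x
  rw [sub_apply, inner_sub_left, map_sub, sub_nonneg] at hsq
  calc ‖D x‖ ^ 2 = re ⟪(D * D) x, x⟫_ℂ := by
        rw [apply_norm_sq_eq_inner_adjoint_left, ← star_eq_adjoint, hD.isSelfAdjoint.star_eq]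
        rfl
    _ ≤ re ⟪(‖D‖ • D) x, x⟫_ℂ := hsq
    _ = ‖D‖ * re ⟪D x, x⟫_ℂ := by
      rw [smul_apply, RCLike.real_smul_eq_coe_smul (K := ℂ), inner_smul_real_left, RCLike.smul_re]

theorem cauchySeq_apply_of_antitone {A : ℕ → H →L[ℂ] H} (hA : Antitone A) (hA0 : ∀ k, 0 ≤ A k)
    (x : H) : CauchySeq fun k => A k x := by
  set f : ℕ → ℝ := fun k => re ⟪A k x, x⟫_ℂ
  have hf : Antitone f := fun n m hnm => by
    simpa [f, inner_sub_left] using ((le_def _ _).1 (hA hnm)).re_inner_nonneg_left x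
  have hf_cauchy : CauchySeq f := (tendsto_atTop_ciInf hf ⟨0, by
    rintro _ ⟨k, rfl⟩
    exact ((nonneg_iff_isPositive _).1 (hA0 k)).re_inner_nonneg_left x⟩).cauchySeq
  have key : ∀ n m, n ≤ m → dist (A n x) (A m x) ^ 2 ≤ ‖A 0‖ * dist (f n) (f m) := by
    intro n m hnm
    have hD : 0 ≤ A n - A m := sub_nonneg.2 (hA hnm)
    have hD_norm : ‖A n - A m‖ ≤ ‖A 0‖ :=
      CStarAlgebra.norm_le_norm_of_nonneg_of_le hD ((sub_le_self _ (hA0 m)).trans (hA n.zero_le))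
    calc dist (A n x) (A m x) ^ 2 = ‖(A n - A m) x‖ ^ 2 := by rw [dist_eq_norm, sub_apply]
      _ ≤ ‖A n - A m‖ * re ⟪(A n - A m) x, x⟫_ℂ := norm_sq_apply_le_norm_mul_re_inner hD x
      _ ≤ ‖A 0‖ * dist (f n) (f m) := by
        refine mul_le_mul hD_norm ?_ ((nonneg_iff_isPositive _).1 hD |>.re_inner_nonneg_left x)
          (norm_nonneg _)
        simpa [f, inner_sub_left, Real.dist_eq] using le_abs_self (f n - f m)
  refine cauchySeq_of_dist_sq_le hf_cauchy ‖A 0‖ fun n m => ?_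
  rcases le_total n m with hnm | hmn
  · exact key n m hnm
  · rw [dist_comm, dist_comm (f n)]
    exact key m n hmn

theorem exists_tendsto_apply_of_antitone {A : ℕ → H →L[ℂ] H} (hA : Antitone A)
    (hA0 : ∀ k, 0 ≤ A k) :
    ∃ B : H →L[ℂ] H, 0 ≤ B ∧ ∀ x, Tendsto (fun k => A k x) atTop (𝓝 (B x)) := by
  choose g hg using fun x => cauchySeq_tendsto_of_complete (cauchySeq_apply_of_antitone hA hA0 x)
  let B := continuousLinearMapOfTendsto A (tendsto_pi_nhds.2 hg)
  refine ⟨B, (nonneg_iff_isPositive B).2 (isPositive_of_tendsto (fun k => ?_) hg), hg⟩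
  exact (nonneg_iff_isPositive _).1 (hA0 k)

end ContinuousLinearMap

namespace GammaModel

variable {H : Type*} [NormedAddCommGroup H] [InnerProductSpace ℂ H] [CompleteSpace H]
  {T P Q : H →L[ℂ] H}

theorem exists_isAsymptoticLimit (hT : ‖T‖ ≤ 1) : ∃ P, IsAsymptoticLimit T P := by
  obtain ⟨B, hB0, hB⟩ := exists_tendsto_apply_of_antitone
    (CStarAlgebra.antitone_pow_mul_star_pow hT) fun k => star_pow T k ▸ mul_star_self_nonneg _
  refine ⟨CFC.sqrt B, (nonneg_iff_isPositive _).1 (CFC.sqrt_nonneg B), fun h => ?_⟩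
  rw [CFC.sqrt_mul_sqrt_self B hB0]
  refine ((Complex.continuous_re.tendsto _).comp ((hB h).inner tendsto_const_nhds)).congr
    fun k => ?_
  rw [apply_norm_sq_eq_inner_adjoint_left, ← star_eq_adjoint, ← star_eq_adjoint, star_pow,
    star_star]
  rfl

theorem IsAsymptoticLimit.tendsto_norm_sq (hP : IsAsymptoticLimit T P) (h : H) :
    Tendsto (fun k : ℕ => ‖(adjoint T ^ k) h‖ ^ 2) atTop (𝓝 (‖P h‖ ^ 2)) := by
  convert hP.2 h using 2
  rw [apply_norm_sq_eq_inner_adjoint_left, ← star_eq_adjoint, hP.1.isSelfAdjoint.star_eq]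
  rfl

theorem IsAsymptoticLimit.eq (hP : IsAsymptoticLimit T P) (hQ : IsAsymptoticLimit T Q) :
    P = Q :=
  hP.1.eq_of_norm_apply_eq hQ.1 fun h => by
    simpa using tendsto_nhds_unique (hP.tendsto_norm_sq h) (hQ.tendsto_norm_sq h)

theorem IsAsymptoticLimit.norm_apply_adjoint (hP : IsAsymptoticLimit T P) (h : H) :
    ‖P (adjoint T h)‖ = ‖P h‖ := by
  have hshift := (hP.tendsto_norm_sq h).comp (tendsto_add_atTop_nat 1)
  simp only [Function.comp_def, pow_succ] at hshift
  exact (sq_eq_sq₀ (norm_nonneg _) (norm_nonneg _)).1 <|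
    tendsto_nhds_unique (hP.tendsto_norm_sq (adjoint T h)) hshift

end GammaModel

/-- For a contraction `T` on a complex Hilbert space: (1) `lim_k ‖T*ᵏh‖²`
exists for every `h`; (2) there is a unique positive operator `P` with
`⟨P²h, h⟩ = lim_k ‖T*ᵏh‖²` for all `h`; (3) any such `P` satisfies `‖P T* h‖ = ‖P h‖`
for all `h` (so `Ph ↦ PT*h` extends to an isometry of `closure (range P)`). -/
theorem asymptotic_limit_exists_unique {H : Type*}
    [NormedAddCommGroup H] [InnerProductSpace ℂ H] [CompleteSpace H]
    (T : H →L[ℂ] H) (hT : ‖T‖ ≤ 1) :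
    (∀ h : H, ∃ L : ℝ,
      Tendsto (fun k : ℕ => ‖(adjoint T ^ k) h‖ ^ 2) atTop (nhds L)) ∧
    (∃! P : H →L[ℂ] H, IsAsymptoticLimit T P) ∧
    (∀ P : H →L[ℂ] H, IsAsymptoticLimit T P → ∀ h : H, ‖P (adjoint T h)‖ = ‖P h‖) := by
  obtain ⟨P, hP⟩ := exists_isAsymptoticLimit hT
  exact ⟨fun h => ⟨_, hP.2 h⟩, ⟨P, hP, fun Q hQ => hQ.eq hP⟩,
    fun Q hQ => hQ.norm_apply_adjoint⟩
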